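/- arXiv:math/9202204 — 2 statements merged into one kernel-verified Lean document; each statement's English description precedes it below -/
import Mathlib

section
/- Let $(x_n)$ be a weakly null sequence of nonzero indicator functions on a compact metric space $K$. Then the family $\mathcal{F} = \{F \subset \mathbb{N} : F = \{n : x_n(k) = 1\} \text{ for some } k \in K\}$ is adequate (closed under taking subsets) if and only if $(x_n)$ is a 1-suppression unconditional basic sequence in $C(K)$. -/
/-!
Write `F k = {n | x n k = 1}`. If the family of the `F k` is hereditary, then for `G ⊆ s` and any
point `k` there is a point `k'` with `F k' = F k ∩ G`, at which `∑_{n ∈ s} a n x n` takes the value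
of `∑_{n ∈ G} a n x n` at `k`; this gives the suppression inequality.

Conversely, let `G ⊆ F k₀`; weak nullity makes `G` finite. For a finite `T` disjoint from `G`,
`g = (#T + 1) ∑_{n ∈ G} x n - ∑_{n ∈ T} x n` takes the value `(#T + 1) #(G ∩ F k) - #(T ∩ F k)` at
`k`. Suppression bounds `‖g‖` below by the value `(#T + 1) #G` of its `G`-part at `k₀`, and `|g k|`
reaches this only if `G ⊆ F k` and `T ∩ F k = ∅`. Compactness of `K` turns these finitely many
constraints into a point `k` with `F k = G`; for `G = ∅` one puts into the role of `G` some
`N ∉ T` with `x N ≠ 0`.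
-/

open Filter Topology Finset

theorem Filter.Tendsto.finite_setOf_eq_of_ne {X : Type*} [TopologicalSpace X] [T1Space X]
    {f : ℕ → X} {a b : X} (hf : Tendsto f atTop (𝓝 a)) (hab : a ≠ b) :
    {n | f n = b}.Finite := by
  have := hf.eventually_ne hab
  rw [← Nat.cofinite_eq_atTop, eventually_cofinite] at this
  simpa using this

theorem ContinuousMap.exists_norm_apply_eq_norm {K E : Type*} [TopologicalSpace K]
    [CompactSpace K] [Nonempty K] [NormedAddCommGroup E] (f : C(K, E)) :
    ∃ k, ‖f k‖ = ‖f‖ := by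
  obtain ⟨k, -, hk⟩ := isCompact_univ.exists_isMaxOn Set.univ_nonempty
    (continuous_norm.comp f.continuous).continuousOn
  exact ⟨k, le_antisymm (f.norm_coe_le_norm k)
    ((f.norm_le (norm_nonneg _)).mpr fun y => hk (Set.mem_univ y))⟩

theorem Nat.eq_and_eq_zero_of_mul_le_abs_sub {c d g t : ℕ} (hc : c ≤ g) (hd : d ≤ t)
    (hg : 1 ≤ g) (h : ((t : ℝ) + 1) * g ≤ |((t : ℝ) + 1) * c - d|) : c = g ∧ d = 0 := by
  have hc' : (c : ℝ) ≤ g := by exact_mod_cast hc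
  have hd' : (d : ℝ) ≤ t := by exact_mod_cast hd
  have hg' : (1 : ℝ) ≤ g := by exact_mod_cast hg
  have hc0 : (0 : ℝ) ≤ c := c.cast_nonneg
  have hd0 : (0 : ℝ) ≤ d := d.cast_nonneg
  rw [← Nat.cast_inj (R := ℝ), ← Nat.cast_eq_zero (R := ℝ)]
  rcases abs_cases (((t : ℝ) + 1) * c - d) with ⟨habs, -⟩ | ⟨habs, -⟩ <;> rw [habs] at h
  · have : 0 ≤ ((t : ℝ) + 1) * (g - c) := mul_nonneg (by linarith) (by linarith)
    constructor <;> nlinarith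
  · have : (t : ℝ) + 1 ≤ (t + 1) * g := le_mul_of_one_le_right (by linarith) hg'
    have : 0 ≤ ((t : ℝ) + 1) * c := mul_nonneg (by linarith) hc0
    linarith

def IsSuppressionUnconditional {E : Type*} [SeminormedAddCommGroup E] [Module ℝ E]
    (x : ℕ → E) : Prop :=
  ∀ (a : ℕ → ℝ) (s G : Finset ℕ), G ⊆ s → ‖∑ n ∈ G, a n • x n‖ ≤ ‖∑ n ∈ s, a n • x n‖

section IndicatorFamily

variable {K : Type*} [TopologicalSpace K] {x : ℕ → C(K, ℝ)}

theorem sum_smul_apply_eq_sum_filter (hx : ∀ n k, x n k = 0 ∨ x n k = 1) (a : ℕ → ℝ)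
    (s : Finset ℕ) (k : K) : (∑ n ∈ s, a n • x n) k = ∑ n ∈ s with x n k = 1, a n := by
  rw [sum_filter, ContinuousMap.sum_apply]
  refine sum_congr rfl fun n _ => ?_
  rcases hx n k with h | h <;> simp [h]

theorem exists_eq_one_of_ne_zero (hx : ∀ n k, x n k = 0 ∨ x n k = 1) {n : ℕ} (hn : x n ≠ 0) :
    ∃ k, x n k = 1 := by
  by_contra! h
  exact hn (ContinuousMap.ext fun k => (hx n k).resolve_right (h k))

variable [CompactSpace K]

theorem isSuppressionUnconditional_of_hereditary (hx : ∀ n k, x n k = 0 ∨ x n k = 1)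
    (hered : ∀ k, ∀ G ⊆ {n | x n k = 1}, ∃ k', G = {n | x n k' = 1}) :
    IsSuppressionUnconditional x := by
  intro a s G hGs
  refine (ContinuousMap.norm_le _ (norm_nonneg _)).mpr fun k => ?_
  obtain ⟨k', hk'⟩ := hered k {n | n ∈ G ∧ x n k = 1} fun n hn => hn.2
  have hfilter : {n ∈ G | x n k = 1} = {n ∈ s | x n k' = 1} := by
    ext n
    have hn : n ∈ G ∧ x n k = 1 ↔ x n k' = 1 := Set.ext_iff.mp hk' n
    rw [mem_filter, mem_filter, ← hn]
    exact ⟨fun h => ⟨hGs h.1, h⟩, fun h => h.2⟩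
  rw [sum_smul_apply_eq_sum_filter hx, hfilter, ← sum_smul_apply_eq_sum_filter hx]
  exact ContinuousMap.norm_coe_le_norm _ k'

theorem exists_eq_one_and_eq_zero_of_isSuppressionUnconditional
    (hx : ∀ n k, x n k = 0 ∨ x n k = 1) (hsup : IsSuppressionUnconditional x)
    {G T : Finset ℕ} (hGT : Disjoint G T) (hG : G.Nonempty) {k₀ : K}
    (hk₀ : ∀ n ∈ G, x n k₀ = 1) :
    ∃ k, (∀ n ∈ G, x n k = 1) ∧ ∀ n ∈ T, x n k = 0 := by
  set M : ℝ := #T + 1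
  set a : ℕ → ℝ := fun n => if n ∈ G then M else -1
  have hval : ∀ k, (∑ n ∈ G ∪ T, a n • x n) k =
      M * #{n ∈ G | x n k = 1} - #{n ∈ T | x n k = 1} := by
    intro k
    rw [sum_smul_apply_eq_sum_filter hx, filter_union,
      sum_union (disjoint_filter_filter hGT),
      sum_congr rfl fun n hn => if_pos (mem_filter.1 hn).1,
      sum_congr rfl fun n hn => if_neg (disjoint_right.1 hGT (mem_filter.1 hn).1)]
    simp only [sum_const, nsmul_eq_mul]
    ring
  have hlower : M * #G ≤ ‖∑ n ∈ G ∪ T, a n • x n‖ :=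
    calc M * #G = (∑ n ∈ G, a n • x n) k₀ := by
          rw [sum_smul_apply_eq_sum_filter hx, filter_true_of_mem hk₀,
            sum_congr rfl fun n hn => if_pos hn, sum_const, nsmul_eq_mul, mul_comm]
      _ ≤ ‖∑ n ∈ G, a n • x n‖ := (Real.le_norm_self _).trans (ContinuousMap.norm_coe_le_norm _ k₀)
      _ ≤ ‖∑ n ∈ G ∪ T, a n • x n‖ := hsup a _ _ subset_union_left
  have : Nonempty K := ⟨k₀⟩
  obtain ⟨k, hk⟩ := (∑ n ∈ G ∪ T, a n • x n).exists_norm_apply_eq_norm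
  rw [← hk, hval, Real.norm_eq_abs] at hlower
  obtain ⟨hallG, hnoneT⟩ := Nat.eq_and_eq_zero_of_mul_le_abs_sub (card_filter_le _ _)
    (card_filter_le _ _) (card_pos.2 hG) hlower
  exact ⟨k, card_filter_eq_iff.1 hallG,
    fun n hn => (hx n k).resolve_right (card_filter_eq_zero_iff.1 hnoneT n hn)⟩

theorem exists_forall_mem_eq_ite_of_isSuppressionUnconditional
    (hx : ∀ n k, x n k = 0 ∨ x n k = 1) (hnz : ∀ n, x n ≠ 0) (hsup : IsSuppressionUnconditional x)
    {G : Finset ℕ} {k₀ : K} (hk₀ : ∀ n ∈ G, x n k₀ = 1) (u : Finset ℕ) :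
    ∃ k, ∀ n ∈ u, x n k = if n ∈ G then 1 else 0 := by
  rcases G.eq_empty_or_nonempty with rfl | hG
  · obtain ⟨N, hN⟩ := Infinite.exists_notMem_finset u
    obtain ⟨k₁, hk₁⟩ := exists_eq_one_of_ne_zero hx (hnz N)
    obtain ⟨k, -, hk⟩ := exists_eq_one_and_eq_zero_of_isSuppressionUnconditional hx hsup
      (disjoint_singleton_left.2 hN) (singleton_nonempty N) (by simpa using hk₁)
    exact ⟨k, fun n hn => by simpa using hk n hn⟩
  · obtain ⟨k, hG1, hT0⟩ := exists_eq_one_and_eq_zero_of_isSuppressionUnconditional hx hsup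
      disjoint_sdiff hG hk₀ (T := u \ G)
    refine ⟨k, fun n hn => ?_⟩
    split_ifs with h
    · exact hG1 n h
    · exact hT0 n (mem_sdiff.2 ⟨hn, h⟩)

theorem exists_coe_eq_setOf_eq_one_of_isSuppressionUnconditional
    (hx : ∀ n k, x n k = 0 ∨ x n k = 1) (hnz : ∀ n, x n ≠ 0) (hsup : IsSuppressionUnconditional x)
    {G : Finset ℕ} {k₀ : K} (hk₀ : ∀ n ∈ G, x n k₀ = 1) :
    ∃ k, (G : Set ℕ) = {n | x n k = 1} := by
  obtain ⟨k, hk⟩ := CompactSpace.iInter_nonempty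
    (t := fun n => {k | x n k = if n ∈ G then 1 else 0})
    (fun n => isClosed_eq (x n).continuous continuous_const) fun u => by
      obtain ⟨k, hk⟩ := exists_forall_mem_eq_ite_of_isSuppressionUnconditional hx hnz hsup hk₀ u
      exact ⟨k, Set.mem_iInter₂.2 hk⟩
  refine ⟨k, Set.ext fun n => ?_⟩
  have hkn : x n k = if n ∈ G then 1 else 0 := Set.mem_iInter.1 hk n
  split_ifs at hkn with h <;> simp [h, hkn]

end IndicatorFamily

/-- for a weakly null sequence of nonzero indicator functions on a
compact metric space `K`, the family `𝓕 = {{n | x n k = 1} : k ∈ K}` is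
adequate (hereditary) iff `(x_n)` is a 1-suppression unconditional basic
sequence in `C(K)`. -/
theorem stmt_9 {K : Type*} [MetricSpace K] [CompactSpace K]
    (x : ℕ → C(K, ℝ))
    (hind : ∀ n, (∀ k, x n k = 0 ∨ x n k = 1) ∧ x n ≠ 0)
    (hweak : ∀ φ : StrongDual ℝ C(K, ℝ),
      Tendsto (fun n => φ (x n)) atTop (𝓝 0)) :
    (∀ F ∈ {F : Set ℕ | ∃ k : K, F = {n | x n k = 1}},
        ∀ G ⊆ F, G ∈ {F : Set ℕ | ∃ k : K, F = {n | x n k = 1}}) ↔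
    (∀ (a : ℕ → ℝ) (s G : Finset ℕ), G ⊆ s →
        ‖∑ n ∈ G, a n • x n‖ ≤ ‖∑ n ∈ s, a n • x n‖) := by
  have hx : ∀ n k, x n k = 0 ∨ x n k = 1 := fun n => (hind n).1
  constructor
  · exact fun hadq => isSuppressionUnconditional_of_hereditary hx fun k G hG => hadq _ ⟨k, rfl⟩ G hG
  · rintro hsup F ⟨k, rfl⟩ G hG
    have hfin : {n | x n k = 1}.Finite :=
      (hweak (ContinuousMap.evalCLM ℝ k)).finite_setOf_eq_of_ne zero_ne_one
    obtain ⟨G, rfl⟩ := (hfin.subset hG).exists_finset_coe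
    exact exists_coe_eq_setOf_eq_one_of_isSuppressionUnconditional hx (fun n => (hind n).2) hsup
      fun n hn => hG hn
end

section
/- For each countable ordinal $\alpha$ and each $\lambda$, the oscillation sets of the generalized Schreier sequence $(x_n^\alpha)$ on $\mathcal{F}_\alpha$ coincide with the Cantor–Bendixson derived sets: $\mathcal{O}^\lambda(\epsilon, (x^\alpha_n), \mathcal{F}_\alpha) = \mathcal{F}_\alpha^{(\lambda)}$ for every $0 < \epsilon < 1$. In particular $\mathcal{O}^{\omega^\alpha}(\epsilon, (x^\alpha_n), \mathcal{F}_\alpha) = \{\emptyset\} \ne \emptyset$, so the oscillation index of $(x^\alpha_n)$ equals $\omega^\alpha$. The key step is: if $F \in \mathcal{F}_\alpha^{(\lambda+1)}$ then there exists $N$ such that $F \cup \{n\} \in \mathcal{F}_\alpha^{(\lambda)}$ for all $n \ge N$. -/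
/-!
Points of `indFam 𝓐` are indicators `1_S` of finite sets. For a hereditary family `G` whose
indicator set is closed, `1_S` is an accumulation point iff `S ∪ {n} ∈ G` for infinitely many `n`.
When `G` is spreading this upgrades to all large `n`, which is also the oscillation condition at
`1_S`: at `1_T`, `x_n - x_m` equals `1` if `n ∈ T` and `m` is large, and is never negative for large
`m`. Hence both transfinite iterations are the iterated combinatorial derivative of `𝓕_α`.

By induction on `α`, `𝓕_α` is hereditary, spreading, and has combinatorial index exactly `ω ^ α`.
For the lower bound, a copy of `𝓕_β` grafted above a union of `k` blocks shows that `∅` survives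
`ω ^ β * k` derivatives. For the upper bound (which also gives compactness), a rank function that
strictly decreases along end-extensions is read off the last nonempty block of a block
decomposition.
-/
/-- Admissible unions of blocks: sets of the form `F₁ ∪ ⋯ ∪ F_n` with
`F_i ∈ F (g i)`, `n ≤ F₁ < F₂ < ⋯ < F_n` (conditions read on nonempty blocks,
equivalently every element is `≥ n` and blocks come in increasing order). -/
def schreierComb (F : Ordinal → Set (Finset ℕ)) (g : ℕ → Ordinal) :
    Set (Finset ℕ) :=
  {S | ∃ n : ℕ, 1 ≤ n ∧ ∃ f : Fin n → Finset ℕ,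
    (∀ i : Fin n, f i ∈ F (g i.val)) ∧
    (∀ i : Fin n, ∀ m ∈ f i, n ≤ m) ∧
    (∀ i j : Fin n, i < j → ∀ a ∈ f i, ∀ b ∈ f j, a < b) ∧
    S = Finset.univ.biUnion f}

/-- A system of generalized Schreier families `𝓕_α` for countable `α`:
`𝓕₀` is the singletons together with `∅`; for a successor `β+1` one uses the
constant sequence `α_i = β`; for a limit `α` a fixed strictly increasing
sequence `α_i ↑ α`. -/
def SchreierSystem (F : Ordinal → Set (Finset ℕ)) : Prop :=
  F 0 = insert ∅ {S : Finset ℕ | ∃ n : ℕ, S = {n}} ∧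
  (∀ β : Ordinal, (β + 1).card ≤ Cardinal.aleph0 →
    F (β + 1) = schreierComb F (fun _ => β)) ∧
  (∀ α : Ordinal, α.card ≤ Cardinal.aleph0 → Order.IsSuccLimit α →
    ∃ g : ℕ → Ordinal, StrictMono g ∧ (∀ i, g i < α) ∧ (⨆ i, g i) = α ∧
      F α = schreierComb F g)


/-- indicator embedding of a family of finite subsets of `ℕ` into `{0,1}^ℕ`. -/
def indFam (𝓐 : Set (Finset ℕ)) : Set (ℕ → Bool) :=
  {x | ∃ F ∈ 𝓐, ∀ m, x m = true ↔ m ∈ F}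

/-- transfinite Cantor–Bendixson iteration starting from a given set. -/
noncomputable def cbIter {X : Type*} [TopologicalSpace X] (s : Set X)
    (o : Ordinal.{0}) : Set X :=
  Ordinal.limitRecOn (motive := fun _ => Set X) o s (fun _ ih => derivedSet ih)
    (fun o _ ih => ⋂ b : {b : Ordinal.{0} // b < o}, ih b.1 b.2)

/-- Transfinite oscillation sets `𝓞^o(ε, (f_n), S)`. -/
noncomputable def oscSet {K : Type*} [TopologicalSpace K] (ε : ℝ)
    (f : ℕ → K → ℝ) (S : Set K) (o : Ordinal.{0}) : Set K :=
  Ordinal.limitRecOn (motive := fun _ => Set K) o S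
    (fun _ D =>
      {k ∈ D | ∀ U ∈ nhds k, ∃ N : ℕ, ∀ n ≥ N, ∃ M : ℕ,
        ((⋂ m ∈ Set.Ici M, {k' : K | ε < f n k' - f m k'}) ∩ D ∩ U).Nonempty ∨
        ((⋂ m ∈ Set.Ici M, {k' : K | f n k' - f m k' < -ε}) ∩ D ∩ U).Nonempty})
    (fun o _ ih => ⋂ b : {b : Ordinal.{0} // b < o}, ih b.1 b.2)

open Filter Topology Ordinal Set Function

/-- `cbIter s` and `oscSet ε f S` unfold to `transIter derivedSet s` and
`transIter (oscStep ε f) S`. -/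
noncomputable def transIter {α : Type*} (d : Set α → Set α) (s : Set α) (o : Ordinal.{0}) :
    Set α :=
  Ordinal.limitRecOn (motive := fun _ => Set α) o s (fun _ ih => d ih)
    (fun o _ ih => ⋂ b : {b : Ordinal.{0} // b < o}, ih b.1 b.2)

section TransIter

variable {α β : Type*} {d : Set α → Set α} {s : Set α}

@[simp] theorem transIter_zero (d : Set α → Set α) (s : Set α) : transIter d s 0 = s :=
  limitRecOn_zero ..

@[simp] theorem transIter_add_one (d : Set α → Set α) (s : Set α) (o : Ordinal.{0}) :
    transIter d s (o + 1) = d (transIter d s o) :=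
  limitRecOn_add_one ..

theorem transIter_of_isSuccLimit {o : Ordinal.{0}} (ho : Order.IsSuccLimit o) :
    transIter d s o = ⋂ b : {b : Ordinal.{0} // b < o}, transIter d s b :=
  limitRecOn_limit _ _ _ _ ho

theorem mem_transIter_of_isSuccLimit {o : Ordinal.{0}} (ho : Order.IsSuccLimit o) {x : α} :
    x ∈ transIter d s o ↔ ∀ b < o, x ∈ transIter d s b := by
  simp [transIter_of_isSuccLimit ho]

theorem transIter_induction (P : Set α → Prop) (h0 : P s) (hd : ∀ u, P u → P (d u))
    (hI : ∀ S : Set (Set α), (∀ u ∈ S, P u) → P (⋂₀ S)) (o : Ordinal.{0}) :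
    P (transIter d s o) := by
  induction o using Ordinal.limitRecOn with
  | zero => simpa using h0
  | add_one o ih => simpa using hd _ ih
  | limit o ho ih =>
    rw [transIter_of_isSuccLimit ho, ← sInter_range]
    exact hI _ (forall_mem_range.2 fun b => ih b.1 b.2)

theorem image_transIter_subset {d₁ : Set α → Set α} {d₂ : Set β → Set β} {t : Set β}
    {φ : α → β} (h0 : φ '' s ⊆ t) (hd : ∀ u v, φ '' u ⊆ v → φ '' d₁ u ⊆ d₂ v)
    (o : Ordinal.{0}) : φ '' transIter d₁ s o ⊆ transIter d₂ t o := by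
  induction o using Ordinal.limitRecOn with
  | zero => simpa using h0
  | add_one o ih => simpa using hd _ _ ih
  | limit o ho ih =>
    rw [transIter_of_isSuccLimit ho, transIter_of_isSuccLimit ho]
    exact (image_iInter_subset _ _).trans (iInter_mono fun b => ih b.1 b.2)

theorem transIter_image {d₁ : Set α → Set α} {d₂ : Set β → Set β} {φ : α → β}
    (hφ : Injective φ) (hd : ∀ o, d₂ (φ '' transIter d₁ s o) = φ '' d₁ (transIter d₁ s o))
    (o : Ordinal.{0}) : transIter d₂ (φ '' s) o = φ '' transIter d₁ s o := by
  induction o using Ordinal.limitRecOn with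
  | zero => simp
  | add_one o ih => rw [transIter_add_one, transIter_add_one, ih, hd]
  | limit o ho ih =>
    have : Nonempty {b : Ordinal.{0} // b < o} := ⟨⟨0, ho.pos⟩⟩
    rw [transIter_of_isSuccLimit ho, transIter_of_isSuccLimit ho, hφ.injOn.image_iInter_eq]
    exact iInter_congr fun b => ih b.1 b.2

theorem transIter_antitone (hd : ∀ u, d u ⊆ u) : Antitone (transIter d s) := by
  intro a b hab
  induction b using Ordinal.limitRecOn with
  | zero => rw [nonpos_iff_eq_zero.1 hab]
  | add_one b ih =>
    rcases hab.lt_or_eq with h | rfl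
    · exact (transIter_add_one d s b ▸ hd _).trans (ih (Order.lt_add_one_iff.1 h))
    · rfl
  | limit b hb ih =>
    rcases hab.lt_or_eq with h | rfl
    · rw [transIter_of_isSuccLimit hb]
      exact iInter_subset_of_subset ⟨a, h⟩ subset_rfl
    · rfl

theorem transIter_subset (hd : ∀ u, d u ⊆ u) (o : Ordinal.{0}) : transIter d s o ⊆ s := by
  simpa using transIter_antitone (s := s) hd (zero_le : 0 ≤ o)

theorem transIter_add (hd : ∀ u, d u ⊆ u) (a b : Ordinal.{0}) :
    transIter d s (a + b) = transIter d (transIter d s a) b := by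
  induction b using Ordinal.limitRecOn with
  | zero => simp
  | add_one b ih => rw [← add_assoc, transIter_add_one, transIter_add_one, ih]
  | limit b hb ih =>
    ext x
    rw [mem_transIter_of_isSuccLimit (isSuccLimit_add a hb), mem_transIter_of_isSuccLimit hb]
    refine ⟨fun h e he => ih e he ▸ h _ ((add_lt_add_iff_left a).2 he), fun h c hc => ?_⟩
    obtain ⟨e, he, hce⟩ := (lt_add_iff hb.ne_bot).1 hc
    exact transIter_antitone hd hce (ih e he ▸ h e he)

end TransIter

section Families

variable {G H : Set (Finset ℕ)}

def derivedFam (G : Set (Finset ℕ)) : Set (Finset ℕ) :=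
  {S | S ∈ G ∧ ∃ᶠ n in atTop, insert n S ∈ G}

def Spreading (G : Set (Finset ℕ)) : Prop :=
  ∀ ⦃h : ℕ → ℕ⦄, StrictMono h → ∀ S ∈ G, S.image h ∈ G

def IsRank (G : Set (Finset ℕ)) (ν : Finset ℕ → Ordinal.{0}) : Prop :=
  ∀ ⦃S : Finset ℕ⦄ ⦃n : ℕ⦄, insert n S ∈ G → (∀ s ∈ S, s < n) → ν (insert n S) < ν S

theorem derivedFam_subset (G : Set (Finset ℕ)) : derivedFam G ⊆ G := fun _ h => h.1

theorem eventually_forall_lt (S : Finset ℕ) : ∀ᶠ n in atTop, ∀ s ∈ S, s < n :=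
  (eventually_all_finset S).2 fun s _ => eventually_gt_atTop s

theorem isLowerSet_derivedFam (hG : IsLowerSet G) : IsLowerSet (derivedFam G) :=
  fun _ _ hTS hS => ⟨hG hTS hS.1, hS.2.mono fun _ hn => hG (Finset.insert_subset_insert _ hTS) hn⟩

theorem IsLowerSet.derIter (hG : IsLowerSet G) (o : Ordinal.{0}) :
    IsLowerSet (transIter derivedFam G o) :=
  transIter_induction IsLowerSet hG (fun _ => isLowerSet_derivedFam)
    (fun _ h => isLowerSet_sInter h) o

theorem Spreading.insert_image (hG : Spreading G) {S : Finset ℕ} {n j : ℕ} {h : ℕ → ℕ}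
    (hS : insert n S ∈ G) (hSn : ∀ s ∈ S, s < n) (hh : StrictMono h) (hj : h n ≤ j) :
    insert j (S.image h) ∈ G := by
  let H : ℕ → ℕ := fun x => if x < n then h x else j + (x - n)
  have hH : StrictMono H := by
    intro x y hxy
    simp only [H]
    split_ifs with hx hy hy
    · exact hh hxy
    · exact (hh hx).trans_le (hj.trans (Nat.le_add_right _ _))
    · omega
    · omega
  convert hG hH _ hS using 1
  rw [Finset.image_insert]
  congr 1
  · simp [H]
  · exact Finset.image_congr fun x hx => by simp [H, hSn x hx]

theorem Spreading.eventually_insert_mem (hG : Spreading G) {S : Finset ℕ}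
    (hS : ∃ᶠ n in atTop, insert n S ∈ G) : ∀ᶠ n in atTop, insert n S ∈ G := by
  obtain ⟨n, hn, hSn⟩ := (hS.and_eventually (eventually_forall_lt S)).exists
  filter_upwards [eventually_ge_atTop n] with j hj
  simpa using hG.insert_image hn hSn strictMono_id hj

theorem spreading_derivedFam (hG : Spreading G) : Spreading (derivedFam G) := by
  rintro h hh S ⟨hS, hfreq⟩
  refine ⟨hG hh S hS, ?_⟩
  obtain ⟨n, hn, hSn⟩ := (hfreq.and_eventually (eventually_forall_lt S)).exists
  exact (eventually_ge_atTop (h n)).frequently.mono fun j hj => hG.insert_image hn hSn hh hj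

theorem Spreading.derIter (hG : Spreading G) (o : Ordinal.{0}) :
    Spreading (transIter derivedFam G o) :=
  transIter_induction Spreading hG (fun _ => spreading_derivedFam)
    (fun _ h _ hh S hS => mem_sInter.2 fun u hu => h u hu hh S (mem_sInter.1 hS u hu)) o

theorem Spreading.image_add (hG : Spreading G) {S : Finset ℕ} (hS : S ∈ G) (M : ℕ) :
    S.image (· + M) ∈ G :=
  hG (fun _ _ h => Nat.add_lt_add_right h M) S hS

theorem image_derIter_subset {A C : Set (Finset ℕ)} {φ : Finset ℕ → Finset ℕ} (M : ℕ)
    (hφ : ∀ n S, φ (insert n S) = insert (n + M) (φ S)) (h0 : φ '' A ⊆ C) (o : Ordinal.{0}) :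
    φ '' transIter derivedFam A o ⊆ transIter derivedFam C o := by
  refine image_transIter_subset h0 (fun u v huv => ?_) o
  rintro _ ⟨S, ⟨hS, hfreq⟩, rfl⟩
  refine ⟨huv (mem_image_of_mem φ hS), (tendsto_add_atTop_nat M).frequently ?_⟩
  exact hfreq.mono fun n hn => hφ n S ▸ huv (mem_image_of_mem φ hn)

theorem derIter_mono {A C : Set (Finset ℕ)} (h : A ⊆ C) (o : Ordinal.{0}) :
    transIter derivedFam A o ⊆ transIter derivedFam C o := by
  simpa using image_derIter_subset (φ := id) 0 (fun _ _ => rfl) (by simpa using h) o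

theorem IsRank.mono {ν : Finset ℕ → Ordinal.{0}} (hν : IsRank G ν) (hHG : H ⊆ G) : IsRank H ν :=
  fun _ _ hS => hν (hHG hS)

theorem IsRank.le_of_mem_derIter {ν : Finset ℕ → Ordinal.{0}} (hν : IsRank G ν) {o : Ordinal.{0}}
    {S : Finset ℕ} (hS : S ∈ transIter derivedFam G o) : o ≤ ν S := by
  induction o using Ordinal.limitRecOn generalizing S with
  | zero => exact zero_le
  | add_one o ih =>
    rw [transIter_add_one] at hS
    obtain ⟨n, hn, hSn⟩ := (hS.2.and_eventually (eventually_forall_lt S)).exists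
    exact Order.add_one_le_of_lt
      ((ih hn).trans_lt (hν (transIter_subset derivedFam_subset o hn) hSn))
  | limit o ho ih =>
    exact ho.le_iff_forall_le.2 fun b hb => ih b hb ((mem_transIter_of_isSuccLimit ho).1 hS b hb)

end Families

/-- A regular family of combinatorial index `ω ^ γ`; the rank function also witnesses
compactness. -/
structure IsRegularFamily (G : Set (Finset ℕ)) (γ : Ordinal.{0}) : Prop where
  isLowerSet : IsLowerSet G
  spreading : Spreading G
  empty_mem_derIter : ∅ ∈ transIter derivedFam G (ω ^ γ)
  exists_rank : ∃ ν, IsRank G ν ∧ ∀ S ∈ G, S.Nonempty → ν S < ω ^ γ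

namespace IsRegularFamily

variable {G : Set (Finset ℕ)} {γ : Ordinal.{0}}

theorem empty_mem (h : IsRegularFamily G γ) : ∅ ∈ G :=
  transIter_subset derivedFam_subset _ h.empty_mem_derIter

theorem derIter_opow (h : IsRegularFamily G γ) : transIter derivedFam G (ω ^ γ) = {∅} := by
  obtain ⟨ν, hν, hlt⟩ := h.exists_rank
  refine eq_singleton_iff_unique_mem.2 ⟨h.empty_mem_derIter, fun S hS => ?_⟩
  by_contra hne
  exact (hν.le_of_mem_derIter hS).not_gt
    (hlt S (transIter_subset derivedFam_subset _ hS) (Finset.nonempty_iff_ne_empty.2 hne))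

end IsRegularFamily

theorem isRegularFamily_singletons :
    IsRegularFamily (insert ∅ {S : Finset ℕ | ∃ n, S = {n}}) 0 where
  isLowerSet := by
    rintro S T hTS (rfl | ⟨n, rfl⟩)
    · exact Or.inl (Finset.subset_empty.1 hTS)
    · rcases Finset.subset_singleton_iff.1 hTS with rfl | rfl
      · exact Or.inl rfl
      · exact Or.inr ⟨n, rfl⟩
  spreading := by
    rintro h - S (rfl | ⟨n, rfl⟩)
    · exact Or.inl (Finset.image_empty h)
    · exact Or.inr ⟨h n, Finset.image_singleton h n⟩
  empty_mem_derIter := by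
    rw [opow_zero, ← zero_add 1, transIter_add_one, transIter_zero]
    exact ⟨Or.inl rfl, Frequently.of_forall fun n => Or.inr ⟨n, rfl⟩⟩
  exists_rank := by
    classical
    refine ⟨fun S => if S = ∅ then 1 else 0, ?_, fun S _ hS => by simp [hS.ne_empty]⟩
    rintro S n (h | ⟨m, h⟩) hSn
    · exact absurd h (Finset.insert_ne_empty n S)
    · have hS : S = ∅ := Finset.eq_empty_of_forall_notMem fun s hs => by
        have hs' : s = m := Finset.mem_singleton.1 (h ▸ Finset.mem_insert_of_mem hs)
        have hn : n = m := Finset.mem_singleton.1 (h ▸ Finset.mem_insert_self n S)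
        exact (hSn s hs).ne (hs'.trans hn.symm)
      simp [hS]

section Blocks

structure IsBlockDecomp (G : ℕ → Set (Finset ℕ)) (n : ℕ) (f : ℕ → Finset ℕ) (S : Finset ℕ) :
    Prop where
  mem : ∀ i < n, f i ∈ G i
  lt : ∀ i j, i < j → j < n → ∀ a ∈ f i, ∀ b ∈ f j, a < b
  eq : S = (Finset.range n).biUnion f

def blockFam (G : ℕ → Set (Finset ℕ)) (n : ℕ) : Set (Finset ℕ) :=
  {S | ∃ f, IsBlockDecomp G n f S}

variable {G : ℕ → Set (Finset ℕ)} {n : ℕ} {f : ℕ → Finset ℕ} {S : Finset ℕ}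

namespace IsBlockDecomp

theorem subset (hd : IsBlockDecomp G n f S) {i : ℕ} (hi : i < n) : f i ⊆ S :=
  hd.eq ▸ Finset.subset_biUnion_of_mem f (Finset.mem_range.2 hi)

theorem inter (hd : IsBlockDecomp G n f S) (hG : ∀ i, IsLowerSet (G i)) {T : Finset ℕ}
    (hTS : T ⊆ S) : IsBlockDecomp G n (fun i => f i ∩ T) T where
  mem i hi := hG i Finset.inter_subset_left (hd.mem i hi)
  lt i j hij hj a ha b hb :=
    hd.lt i j hij hj a (Finset.mem_inter.1 ha).1 b (Finset.mem_inter.1 hb).1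
  eq := by rw [← Finset.biUnion_inter, ← hd.eq, Finset.inter_eq_right.2 hTS]

theorem image (hd : IsBlockDecomp G n f S) (hG : ∀ i, Spreading (G i)) {h : ℕ → ℕ}
    (hh : StrictMono h) : IsBlockDecomp G n (fun i => (f i).image h) (S.image h) where
  mem i hi := hG i hh _ (hd.mem i hi)
  lt i j hij hj := by
    simp only [Finset.forall_mem_image]
    exact fun a ha b hb => hh (hd.lt i j hij hj a ha b hb)
  eq := by rw [hd.eq, Finset.biUnion_image]

theorem erase (hd : IsBlockDecomp G n f S) (hG : ∀ i, IsLowerSet (G i)) (x : ℕ) :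
    IsBlockDecomp G n (fun i => (f i).erase x) (S.erase x) where
  mem i hi := hG i (Finset.erase_subset _ _) (hd.mem i hi)
  lt i j hij hj a ha b hb :=
    hd.lt i j hij hj a (Finset.mem_of_mem_erase ha) b (Finset.mem_of_mem_erase hb)
  eq := by rw [hd.eq, Finset.erase_biUnion]

theorem eq_empty_of_lt (hd : IsBlockDecomp G n f S) {x : ℕ} (hxS : ∀ s ∈ S, s ≤ x) {i j : ℕ}
    (hxi : x ∈ f i) (hij : i < j) (hj : j < n) : f j = ∅ :=
  Finset.eq_empty_of_forall_notMem fun y hy =>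
    (hd.lt i j hij hj x hxi y hy).not_ge (hxS y (hd.subset hj hy))

theorem append (hd : IsBlockDecomp G n f S) {T : Finset ℕ} (hT : T ∈ G n)
    (hST : ∀ s ∈ S, ∀ t ∈ T, s < t) : IsBlockDecomp G (n + 1) (update f n T) (S ∪ T) where
  mem i hi := by
    rcases (Nat.lt_succ_iff.1 hi).lt_or_eq with hi | rfl
    · simpa [update_of_ne hi.ne] using hd.mem i hi
    · simpa using hT
  lt i j hij hj a ha b hb := by
    rw [update_of_ne (by omega)] at ha
    rcases (Nat.lt_succ_iff.1 hj).lt_or_eq with hj | rfl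
    · rw [update_of_ne hj.ne] at hb
      exact hd.lt i j hij hj a ha b hb
    · rw [update_self] at hb
      exact hST a (hd.subset hij ha) b hb
  eq := by
    rw [Finset.range_add_one, Finset.biUnion_insert, update_self, Finset.union_comm, hd.eq]
    congr 1
    exact Finset.biUnion_congr rfl fun i hi => (update_of_ne (Finset.mem_range.1 hi).ne _ _).symm

end IsBlockDecomp

theorem isBlockDecomp_empty (hE : ∀ j < n, ∅ ∈ G j) : IsBlockDecomp G n (fun _ => ∅) ∅ where
  mem := hE
  lt _ _ _ _ _ ha := absurd ha (Finset.notMem_empty _)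
  eq := by ext; simp

theorem isBlockDecomp_single (hE : ∀ j, ∅ ∈ G j) {i : ℕ} (hS : S ∈ G i) :
    IsBlockDecomp G (i + 1) (update (fun _ => ∅) i S) S := by
  have := (isBlockDecomp_empty fun j _ => hE j).append hS (by simp)
  rwa [Finset.empty_union] at this

theorem mem_schreierComb_iff {F : Ordinal → Set (Finset ℕ)} {g : ℕ → Ordinal} :
    S ∈ schreierComb F g ↔
      ∃ n, 1 ≤ n ∧ (∀ s ∈ S, n ≤ s) ∧ S ∈ blockFam (fun i => F (g i)) n := by
  constructor
  · rintro ⟨n, hn, f, hmem, hge, hlt, rfl⟩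
    refine ⟨n, hn, fun s hs => ?_, fun i => if h : i < n then f ⟨i, h⟩ else ∅,
      fun i hi => by simpa [hi] using hmem ⟨i, hi⟩, fun i j hij hj a ha b hb => ?_, ?_⟩
    · obtain ⟨i, -, hi⟩ := Finset.mem_biUnion.1 hs
      exact hge i s hi
    · simp only [dif_pos (hij.trans hj), dif_pos hj] at ha hb
      exact hlt ⟨i, hij.trans hj⟩ ⟨j, hj⟩ hij a ha b hb
    · ext y
      simp only [Finset.mem_biUnion, Finset.mem_univ, Finset.mem_range, true_and, Fin.exists_iff]
      exact ⟨fun ⟨i, hi, hy⟩ => ⟨i, hi, by simpa [hi] using hy⟩,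
        fun ⟨i, hi, hy⟩ => ⟨i, hi, by simpa [hi] using hy⟩⟩
  · rintro ⟨n, hn, hge, f, hd⟩
    refine ⟨n, hn, fun i => f i, fun i => hd.mem i i.2,
      fun i m hm => hge m (hd.subset i.2 hm), fun i j hij => hd.lt i j hij j.2, ?_⟩
    rw [hd.eq]
    ext y
    simp [Fin.exists_iff]

end Blocks

section SchreierComb

variable {F : Ordinal.{0} → Set (Finset ℕ)} {g : ℕ → Ordinal.{0}}

theorem isLowerSet_schreierComb (hF : ∀ i, IsLowerSet (F (g i))) :
    IsLowerSet (schreierComb F g) := by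
  intro S T hTS hS
  obtain ⟨n, hn, hge, f, hd⟩ := mem_schreierComb_iff.1 hS
  exact mem_schreierComb_iff.2 ⟨n, hn, fun t ht => hge t (hTS ht), _, hd.inter hF hTS⟩

theorem spreading_schreierComb (hF : ∀ i, Spreading (F (g i))) : Spreading (schreierComb F g) := by
  intro h hh S hS
  obtain ⟨n, hn, hge, f, hd⟩ := mem_schreierComb_iff.1 hS
  refine mem_schreierComb_iff.2 ⟨n, hn, ?_, _, hd.image hF hh⟩
  simp only [Finset.forall_mem_image]
  exact fun s hs => (hge s hs).trans (hh.id_le s)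

theorem image_add_mem_schreierComb (hF : ∀ i, Spreading (F (g i))) {n : ℕ} (hn : 1 ≤ n)
    {S : Finset ℕ} (hS : S ∈ blockFam (fun i => F (g i)) n) :
    S.image (· + n) ∈ schreierComb F g := by
  obtain ⟨f, hd⟩ := hS
  exact mem_schreierComb_iff.2
    ⟨n, hn, by simp, _, hd.image hF fun _ _ h => Nat.add_lt_add_right h n⟩

theorem empty_mem_derIter_schreierComb (hF : ∀ i, Spreading (F (g i))) {n : ℕ} (hn : 1 ≤ n)
    {o : Ordinal.{0}} (h : ∅ ∈ transIter derivedFam (blockFam (fun i => F (g i)) n) o) :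
    ∅ ∈ transIter derivedFam (schreierComb F g) o := by
  refine image_derIter_subset (φ := fun S => S.image (· + n)) n (fun _ _ => Finset.image_insert ..)
    ?_ o ⟨∅, h, Finset.image_empty _⟩
  rintro _ ⟨S, hS, rfl⟩
  exact image_add_mem_schreierComb hF hn hS

end SchreierComb

section Rank

variable {G : ℕ → Set (Finset ℕ)} {δ : ℕ → Ordinal.{0}} {ρ : ℕ → Finset ℕ → Ordinal.{0}}

/-- Only the last nonempty block counts, padded by `δ k` for each empty block above it: removing
the top element of a set only shrinks that block, so the rank grows. -/
noncomputable def blockRank (δ : ℕ → Ordinal.{0}) (ρ : ℕ → Finset ℕ → Ordinal.{0})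
    (f : ℕ → Finset ℕ) : ℕ → Ordinal.{0}
  | 0 => 0
  | k + 1 => if f k = ∅ then δ k + blockRank δ ρ f k else ρ k (f k)

def blockRanks (G : ℕ → Set (Finset ℕ)) (δ : ℕ → Ordinal.{0}) (ρ : ℕ → Finset ℕ → Ordinal.{0})
    (S : Finset ℕ) : Set Ordinal.{0} :=
  {o | ∃ n f, (∀ s ∈ S, n ≤ s) ∧ IsBlockDecomp G n f S ∧ o = blockRank δ ρ f n}

theorem blockRank_congr {f f' : ℕ → Finset ℕ} :
    ∀ {n : ℕ}, (∀ k < n, f k = f' k) → blockRank δ ρ f n = blockRank δ ρ f' n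
  | 0, _ => rfl
  | n + 1, h => by
    simp only [blockRank, h n n.lt_add_one, blockRank_congr fun k hk => h k (hk.trans n.lt_add_one)]

theorem blockRank_lt {γ : Ordinal.{0}} (hδ : ∀ k, δ k < ω ^ γ) {f : ℕ → Finset ℕ} :
    ∀ {n : ℕ}, (∀ k < n, f k ≠ ∅ → ρ k (f k) < δ k) → blockRank δ ρ f n < ω ^ γ
  | 0, _ => opow_pos γ omega0_pos
  | n + 1, hρ => by
    unfold blockRank
    split_ifs with h
    · exact isPrincipal_add_omega0_opow γ (hδ n)
        (blockRank_lt hδ fun k hk => hρ k (hk.trans n.lt_add_one))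
    · exact (hρ n n.lt_add_one h).trans (hδ n)

theorem blockRank_lt_of_tail {f f' : ℕ → Finset ℕ} {i n : ℕ} (hi : i < n)
    (hf : ∀ k, i < k → k < n → f k = ∅) (hf' : ∀ k, i < k → k < n → f' k = ∅)
    (h : blockRank δ ρ f (i + 1) < blockRank δ ρ f' (i + 1)) :
    blockRank δ ρ f n < blockRank δ ρ f' n := by
  induction n, hi using Nat.le_induction with
  | base => exact h
  | succ n hin ih =>
    simp only [blockRank, hf n hin n.lt_add_one, hf' n hin n.lt_add_one, if_true]
    exact (add_lt_add_iff_left _).2 (ih (fun k hk hkn => hf k hk (hkn.trans n.lt_add_one))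
      (fun k hk hkn => hf' k hk (hkn.trans n.lt_add_one)))

theorem blockRank_lt_blockRank_erase (hρ : ∀ k, IsRank (G k) (ρ k))
    (hρδ : ∀ k, ∀ S ∈ G k, S.Nonempty → ρ k S < δ k) {n : ℕ} {f : ℕ → Finset ℕ} {S : Finset ℕ}
    (hd : IsBlockDecomp G n f S) {x : ℕ} (hx : x ∈ S) (hxS : ∀ s ∈ S, s ≤ x) :
    blockRank δ ρ f n < blockRank δ ρ (fun j => (f j).erase x) n := by
  obtain ⟨i, hi, hxi⟩ : ∃ i < n, x ∈ f i := by simpa [hd.eq] using hx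
  have hempty : ∀ k, i < k → k < n → f k = ∅ := fun k => hd.eq_empty_of_lt hxS hxi
  refine blockRank_lt_of_tail hi hempty (fun k hik hk => by simp [hempty k hik hk]) ?_
  have hfi : f i ≠ ∅ := Finset.ne_empty_of_mem hxi
  simp only [blockRank, if_neg hfi]
  split_ifs with he
  · exact (hρδ i _ (hd.mem i hi) ⟨x, hxi⟩).trans_le le_self_add
  · have hlt : ∀ s ∈ (f i).erase x, s < x := fun s hs =>
      (hxS s (hd.subset hi (Finset.mem_of_mem_erase hs))).lt_of_ne (Finset.ne_of_mem_erase hs)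
    have := hρ i (by rw [Finset.insert_erase hxi]; exact hd.mem i hi) hlt
    rwa [Finset.insert_erase hxi] at this

theorem finite_blockRanks {S : Finset ℕ} (hS : S.Nonempty) : (blockRanks G δ ρ S).Finite := by
  classical
  obtain ⟨m, hm⟩ := hS
  refine (Set.finite_range fun p : Fin (m + 1) × (Fin m → S.powerset) =>
    blockRank δ ρ (fun i => if h : i < m then (p.2 ⟨i, h⟩ : Finset ℕ) else ∅) p.1).subset ?_
  rintro _ ⟨n, f, hn, hd, rfl⟩
  have hnm : n ≤ m := hn m hm
  refine ⟨(⟨n, by omega⟩, fun i => ⟨if (i : ℕ) < n then f i else ∅, ?_⟩),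
    blockRank_congr fun k hk => ?_⟩
  · split_ifs with h
    exacts [Finset.mem_powerset.2 (hd.subset h), Finset.empty_mem_powerset _]
  · simp [hk, hk.trans_le hnm]

theorem exists_gt_of_mem_blockRanks_insert (hρ : ∀ k, IsRank (G k) (ρ k))
    (hρδ : ∀ k, ∀ S ∈ G k, S.Nonempty → ρ k S < δ k) (hG : ∀ k, IsLowerSet (G k))
    {S : Finset ℕ} {x : ℕ} (hSx : ∀ s ∈ S, s < x) {o : Ordinal.{0}}
    (ho : o ∈ blockRanks G δ ρ (insert x S)) : ∃ o' ∈ blockRanks G δ ρ S, o < o' := by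
  obtain ⟨n, f, hn, hd, rfl⟩ := ho
  have hxS : x ∉ S := fun h => (hSx x h).false
  refine ⟨_, ⟨n, _, fun s hs => hn s (Finset.mem_insert_of_mem hs), ?_, rfl⟩,
    blockRank_lt_blockRank_erase hρ hρδ hd (Finset.mem_insert_self x S) ?_⟩
  · simpa [Finset.erase_insert hxS] using hd.erase hG x
  · simpa using fun s hs => (hSx s hs).le

theorem exists_rank_schreierComb {F : Ordinal.{0} → Set (Finset ℕ)} {g : ℕ → Ordinal.{0}}
    {γ : Ordinal.{0}} (hg : ∀ i, g i < γ) (hF : ∀ i, IsLowerSet (F (g i)))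
    (hρ : ∀ i, IsRank (F (g i)) (ρ i)) (hρlt : ∀ i, ∀ S ∈ F (g i), S.Nonempty → ρ i S < ω ^ g i) :
    ∃ ν, IsRank (schreierComb F g) ν ∧ ∀ S ∈ schreierComb F g, S.Nonempty → ν S < ω ^ γ := by
  classical
  have hδ : ∀ i, ω ^ g i < ω ^ γ := fun i => (opow_lt_opow_iff_right one_lt_omega0).2 (hg i)
  have hmax : ∀ S ∈ schreierComb F g, S.Nonempty →
      sSup (blockRanks (fun i => F (g i)) (fun i => ω ^ g i) ρ S) ∈
        blockRanks (fun i => F (g i)) (fun i => ω ^ g i) ρ S := fun S hS hne => by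
    obtain ⟨n, -, hn, f, hd⟩ := mem_schreierComb_iff.1 hS
    exact Set.Nonempty.csSup_mem ⟨_, n, f, hn, hd, rfl⟩ (finite_blockRanks hne)
  let ν : Finset ℕ → Ordinal.{0} := fun S =>
    if S = ∅ then ω ^ γ else sSup (blockRanks (fun i => F (g i)) (fun i => ω ^ g i) ρ S)
  have hlt : ∀ S ∈ schreierComb F g, S.Nonempty → ν S < ω ^ γ := fun S hS hne => by
    obtain ⟨n, f, -, hd, he⟩ := hmax S hS hne
    simp only [ν, if_neg hne.ne_empty, he]
    exact blockRank_lt hδ fun k hk hfk =>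
      hρlt k _ (hd.mem k hk) (Finset.nonempty_iff_ne_empty.2 hfk)
  refine ⟨ν, fun S x hS hSx => ?_, hlt⟩
  rcases S.eq_empty_or_nonempty with rfl | hne
  · simpa [ν] using hlt _ hS (Finset.insert_nonempty _ _)
  · simp only [ν, if_neg hne.ne_empty, if_neg (Finset.insert_ne_empty _ _)]
    obtain ⟨o', ho', hlt'⟩ := exists_gt_of_mem_blockRanks_insert hρ hρlt hF hSx
      (hmax _ hS (Finset.insert_nonempty _ _))
    exact hlt'.trans_le (le_csSup (finite_blockRanks hne).bddAbove ho')

end Rank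

section Schreier

variable {G : Set (Finset ℕ)} {β : Ordinal.{0}}

theorem blockFam_subset_derIter (hG : IsRegularFamily G β) (k : ℕ) :
    blockFam (fun _ => G) k ⊆ transIter derivedFam (blockFam (fun _ => G) (k + 1)) (ω ^ β) := by
  rintro S ⟨f, hd⟩
  obtain ⟨M, hM⟩ := (eventually_forall_lt S).exists
  have hφ : ∀ n (T : Finset ℕ),
      S ∪ (insert n T).image (· + M) = insert (n + M) (S ∪ T.image (· + M)) := fun n T => by
    rw [Finset.image_insert, Finset.union_insert]
  refine image_derIter_subset (φ := fun T => S ∪ T.image (· + M)) M hφ ?_ _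
    ⟨∅, hG.empty_mem_derIter, by simp⟩
  rintro _ ⟨T, hT, rfl⟩
  refine ⟨_, hd.append (hG.spreading.image_add hT M) fun s hs t ht => ?_⟩
  obtain ⟨t, -, rfl⟩ := Finset.mem_image.1 ht
  exact (hM s hs).trans_le (Nat.le_add_left M t)

theorem empty_mem_derIter_blockFam (hG : IsRegularFamily G β) :
    ∀ k : ℕ, ∅ ∈ transIter derivedFam (blockFam (fun _ => G) k) (ω ^ β * k)
  | 0 => by simpa using ⟨_, isBlockDecomp_empty fun _ h => absurd h (Nat.not_lt_zero _)⟩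
  | k + 1 => by
    rw [Nat.cast_add_one, Nat.cast_add_one_comm, mul_one_add, transIter_add derivedFam_subset]
    exact derIter_mono (blockFam_subset_derIter hG k) _ (empty_mem_derIter_blockFam hG k)

theorem IsRegularFamily.schreierComb_const {F : Ordinal.{0} → Set (Finset ℕ)}
    (h : IsRegularFamily (F β) β) : IsRegularFamily (schreierComb F fun _ => β) (β + 1) where
  isLowerSet := isLowerSet_schreierComb fun _ => h.isLowerSet
  spreading := spreading_schreierComb fun _ => h.spreading
  empty_mem_derIter := by
    refine (mem_transIter_of_isSuccLimit
      (isSuccLimit_opow_left isSuccLimit_omega0 (lt_add_one β).ne_bot)).2 fun o ho => ?_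
    obtain ⟨k, hk⟩ := lt_omega0_opow_succ.1 (by rwa [Order.succ_eq_add_one])
    have hk1 : 1 ≤ k := Nat.one_le_iff_ne_zero.2 fun h0 => by simp [h0] at hk
    exact transIter_antitone derivedFam_subset hk.le
      (empty_mem_derIter_schreierComb (fun _ => h.spreading) hk1 (empty_mem_derIter_blockFam h k))
  exists_rank := by
    obtain ⟨ν, hν, hlt⟩ := h.exists_rank
    exact exists_rank_schreierComb (ρ := fun _ => ν) (fun _ => lt_add_one β)
      (fun _ => h.isLowerSet) (fun _ => hν) (fun _ => hlt)

theorem isRegularFamily_schreierComb_of_isSuccLimit {F : Ordinal.{0} → Set (Finset ℕ)}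
    {g : ℕ → Ordinal.{0}} {α : Ordinal.{0}} (hα : Order.IsSuccLimit α) (hg : ∀ i, g i < α)
    (hsup : ⨆ i, g i = α) (h : ∀ i, IsRegularFamily (F (g i)) (g i)) :
    IsRegularFamily (schreierComb F g) α where
  isLowerSet := isLowerSet_schreierComb fun i => (h i).isLowerSet
  spreading := spreading_schreierComb fun i => (h i).spreading
  empty_mem_derIter := by
    refine (mem_transIter_of_isSuccLimit
      (isSuccLimit_opow_left isSuccLimit_omega0 hα.pos.ne')).2 fun o ho => ?_
    obtain ⟨c, hc, hoc⟩ := (lt_opow_of_isSuccLimit omega0_ne_zero hα).1 ho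
    obtain ⟨i, hci⟩ := Ordinal.lt_iSup_iff.1 (hsup ▸ hc)
    have hi : ∅ ∈ transIter derivedFam (F (g i)) o := transIter_antitone derivedFam_subset
      (hoc.le.trans (opow_le_opow_right omega0_pos hci.le)) (h i).empty_mem_derIter
    refine empty_mem_derIter_schreierComb (fun j => (h j).spreading) i.succ_pos
      (derIter_mono (fun S hS => ?_) o hi)
    exact ⟨_, isBlockDecomp_single (fun j => (h j).empty_mem) hS⟩
  exists_rank := by
    choose ρ hρ hlt using fun i => (h i).exists_rank
    exact exists_rank_schreierComb hg (fun i => (h i).isLowerSet) hρ hlt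

theorem SchreierSystem.isRegularFamily {F : Ordinal.{0} → Set (Finset ℕ)} (hF : SchreierSystem F)
    (α : Ordinal.{0}) (hα : α.card ≤ Cardinal.aleph0) : IsRegularFamily (F α) α := by
  induction α using Ordinal.limitRecOn with
  | zero => rw [hF.1]; exact isRegularFamily_singletons
  | add_one β ih =>
    rw [hF.2.1 β hα]
    exact (ih ((card_le_card (le_self_add)).trans hα)).schreierComb_const
  | limit α hl ih =>
    obtain ⟨g, -, hg, hsup, hFα⟩ := hF.2.2 α hα hl
    rw [hFα]
    exact isRegularFamily_schreierComb_of_isSuccLimit hl hg hsup fun i =>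
      ih _ (hg i) ((card_le_card (hg i).le).trans hα)

end Schreier

section Indicators

variable {G : Set (Finset ℕ)}

def ind (S : Finset ℕ) : ℕ → Bool := fun m => decide (m ∈ S)

theorem ind_injective : Injective ind :=
  fun S T h => Finset.ext fun m => by simpa [ind] using congrFun h m

theorem indFam_eq_image (A : Set (Finset ℕ)) : indFam A = ind '' A := by
  ext x
  constructor
  · rintro ⟨S, hS, hx⟩
    exact ⟨S, hS, funext fun m => Bool.eq_iff_iff.2 (by simp [ind, hx m])⟩
  · rintro ⟨S, hS, rfl⟩
    exact ⟨S, hS, fun m => by simp [ind]⟩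

theorem tendsto_ind_insert (S : Finset ℕ) :
    Tendsto (fun n => ind (insert n S)) atTop (𝓝 (ind S)) := by
  refine tendsto_pi_nhds.2 fun m => ?_
  rw [nhds_discrete, tendsto_pure]
  filter_upwards [eventually_gt_atTop m] with n hn
  simp [ind, hn.ne]

theorem eventually_forall_lt_eq (x : ℕ → Bool) (k : ℕ) : ∀ᶠ y in 𝓝 x, ∀ m < k, y m = x m := by
  have h : ∀ m, ∀ᶠ y in 𝓝 x, y m = x m := fun m =>
    tendsto_pure.1 (nhds_discrete Bool ▸ (continuous_apply m).tendsto x)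
  simpa using (eventually_all_finset (Finset.range k)).2 fun m _ => h m

theorem subset_of_ind_eq {S T : Finset ℕ} {k : ℕ} (hS : ∀ s ∈ S, s < k)
    (h : ∀ m < k, ind T m = ind S m) : S ⊆ T :=
  fun s hs => by simpa [ind, hs] using h s (hS s hs)

theorem IsRank.finite_of_forall_subset_mem {ν : Finset ℕ → Ordinal.{0}} (hν : IsRank G ν)
    {s : Set ℕ} (hs : ∀ B : Finset ℕ, ↑B ⊆ s → B ∈ G) : s.Finite := by
  by_contra hinf
  obtain ⟨B, hBs, hmin⟩ :=
    (InvImage.wf ν wellFounded_lt).has_min {B : Finset ℕ | ↑B ⊆ s} ⟨∅, by simp⟩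
  obtain ⟨n, hns, hn⟩ := Set.Infinite.exists_gt hinf (B.sup id)
  have hBn : ∀ b ∈ B, b < n := fun b hb => (Finset.le_sup (f := id) hb).trans_lt hn
  have hins : ↑(insert n B) ⊆ s := by
    rw [Finset.coe_insert]
    exact Set.insert_subset hns hBs
  exact hmin _ hins (hν (hs _ hins) hBn)

theorem isClosed_image_ind (hG : IsLowerSet G) {ν : Finset ℕ → Ordinal.{0}} (hν : IsRank G ν) :
    IsClosed (ind '' G) := by
  refine isClosed_iff_frequently.2 fun x hx => ?_
  have hsub : ∀ B : Finset ℕ, ↑B ⊆ {m | x m = true} → B ∈ G := by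
    intro B hB
    obtain ⟨k, hk⟩ := (eventually_forall_lt B).exists
    obtain ⟨_, ⟨T, hT, rfl⟩, hagree⟩ := (hx.and_eventually (eventually_forall_lt_eq x k)).exists
    refine hG (fun b hb => ?_) hT
    have hb' := hagree b (hk b hb)
    rw [show x b = true from hB hb] at hb'
    simpa [ind] using hb'
  have hfin := hν.finite_of_forall_subset_mem hsub
  exact ⟨hfin.toFinset, hsub _ (by simp), funext fun m => by simp [ind]⟩

theorem derivedSet_image_ind (hG : IsLowerSet G) (hcl : IsClosed (ind '' G)) :
    derivedSet (ind '' G) = ind '' derivedFam G := by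
  ext x
  constructor
  · intro hx
    obtain ⟨S, hS, rfl⟩ := hcl.closure_subset (derivedSet_subset_closure _ hx)
    refine ⟨S, ⟨hS, frequently_atTop.2 fun N => ?_⟩, rfl⟩
    obtain ⟨k, hkN, hkS⟩ := ((eventually_ge_atTop N).and (eventually_forall_lt S)).exists
    obtain ⟨_, ⟨hne, T, hT, rfl⟩, hagree⟩ :=
      ((accPt_iff_frequently.1 hx).and_eventually (eventually_forall_lt_eq _ k)).exists
    have hST := subset_of_ind_eq hkS hagree
    obtain ⟨n, hnT, hnS⟩ := Finset.exists_of_ssubset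
      (hST.ssubset_of_ne fun h => hne (congrArg ind h.symm))
    have hkn : k ≤ n := not_lt.1 fun hnk => hnS (by simpa [ind, hnT] using hagree n hnk)
    exact ⟨n, hkN.trans hkn, hG (Finset.insert_subset hnT hST) hT⟩
  · rintro ⟨S, ⟨hS, hfreq⟩, rfl⟩
    refine accPt_iff_frequently.2 ((tendsto_ind_insert S).frequently ?_)
    refine (hfreq.and_eventually (eventually_forall_lt S)).mono fun n hn => ⟨?_, ⟨_, hn.1, rfl⟩⟩
    exact ind_injective.ne (Finset.insert_ne_self.2 fun h => (hn.2 n h).false)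

theorem cbIter_image_ind {A : Set (Finset ℕ)} (hA : IsLowerSet A) {ν : Finset ℕ → Ordinal.{0}}
    (hν : IsRank A ν) (o : Ordinal.{0}) :
    cbIter (ind '' A) o = ind '' transIter derivedFam A o :=
  transIter_image ind_injective (fun c => derivedSet_image_ind (hA.derIter c)
    (isClosed_image_ind (hA.derIter c) (hν.mono (transIter_subset derivedFam_subset c)))) o

end Indicators

section Oscillation

variable {G : Set (Finset ℕ)} {ε : ℝ}

def oscStep {K : Type*} [TopologicalSpace K] (ε : ℝ) (f : ℕ → K → ℝ) (D : Set K) : Set K :=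
  {k ∈ D | ∀ U ∈ nhds k, ∃ N : ℕ, ∀ n ≥ N, ∃ M : ℕ,
    ((⋂ m ∈ Set.Ici M, {k' : K | ε < f n k' - f m k'}) ∩ D ∩ U).Nonempty ∨
    ((⋂ m ∈ Set.Ici M, {k' : K | f n k' - f m k' < -ε}) ∩ D ∩ U).Nonempty}

def indCoord (n : ℕ) (y : ℕ → Bool) : ℝ := if y n = true then 1 else 0

theorem indCoord_ind (n : ℕ) (S : Finset ℕ) : indCoord n (ind S) = if n ∈ S then 1 else 0 := by
  simp [indCoord, ind]

theorem exists_indCoord_eq_zero (S : Finset ℕ) (M : ℕ) : ∃ m ≥ M, indCoord m (ind S) = 0 := by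
  obtain ⟨m, hmM, hmS⟩ := ((eventually_ge_atTop M).and (eventually_forall_lt S)).exists
  exact ⟨m, hmM, by simp [indCoord_ind, show m ∉ S from fun h => (hmS m h).false]⟩

theorem mem_derivedFam_of_ind_mem_oscStep (hG : IsLowerSet G) (hε : 0 < ε) {S : Finset ℕ}
    (hS : ind S ∈ oscStep ε indCoord (ind '' G)) : S ∈ derivedFam G := by
  obtain ⟨⟨T, hT, hTS⟩, hosc⟩ := hS
  obtain rfl := ind_injective hTS
  refine ⟨hT, frequently_atTop.2 fun N => ?_⟩
  obtain ⟨k, hkN, hkS⟩ := ((eventually_ge_atTop N).and (eventually_forall_lt T)).exists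
  obtain ⟨N₁, hN₁⟩ := hosc _ (eventually_forall_lt_eq (ind T) k)
  obtain ⟨M, hM⟩ := hN₁ (max N₁ k) (le_max_left _ _)
  rcases hM with ⟨_, ⟨hup, U, hU, rfl⟩, hagree⟩ | ⟨_, ⟨hdown, U, -, rfl⟩, -⟩
  · obtain ⟨m, hmM, hm⟩ := exists_indCoord_eq_zero U M
    have hpos : ε < indCoord (max N₁ k) (ind U) - indCoord m (ind U) := mem_iInter₂.1 hup m hmM
    rw [hm, _root_.sub_zero, indCoord_ind] at hpos
    have hnU : max N₁ k ∈ U := by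
      by_contra hn
      rw [if_neg hn] at hpos
      exact hpos.not_gt hε
    exact ⟨_, hkN.trans (le_max_right _ _),
      hG (Finset.insert_subset hnU (subset_of_ind_eq hkS hagree)) hU⟩
  · obtain ⟨m, hmM, hm⟩ := exists_indCoord_eq_zero U M
    have hneg : indCoord (max N₁ k) (ind U) - indCoord m (ind U) < -ε := mem_iInter₂.1 hdown m hmM
    rw [hm, _root_.sub_zero, indCoord_ind] at hneg
    split_ifs at hneg <;> linarith

theorem ind_mem_oscStep (hG : Spreading G) (hε1 : ε < 1) {S : Finset ℕ} (hS : S ∈ derivedFam G) :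
    ind S ∈ oscStep ε indCoord (ind '' G) := by
  refine ⟨mem_image_of_mem ind hS.1, fun U hU => ?_⟩
  obtain ⟨N, hN⟩ := eventually_atTop.1 (((hG.eventually_insert_mem hS.2).and
    ((tendsto_ind_insert S).eventually hU)).and (eventually_forall_lt S))
  refine ⟨N, fun n hn => ⟨n + 1, Or.inl ⟨ind (insert n S),
    ⟨?_, mem_image_of_mem ind (hN n hn).1.1⟩, (hN n hn).1.2⟩⟩⟩
  refine mem_iInter₂.2 fun m (hm : n + 1 ≤ m) => ?_
  have hmS : m ∉ insert n S := by
    simp only [Finset.mem_insert, not_or]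
    exact ⟨by omega, fun h => ((hN n hn).2 m h).not_ge (by omega)⟩
  simp [indCoord_ind, hmS, hε1]

theorem oscSet_image_ind {A : Set (Finset ℕ)} (hA : IsLowerSet A) (hs : Spreading A)
    (hε : 0 < ε) (hε1 : ε < 1) (o : Ordinal.{0}) :
    oscSet ε indCoord (ind '' A) o = ind '' transIter derivedFam A o := by
  refine transIter_image (d₂ := oscStep ε indCoord) ind_injective (fun c => ?_) o
  ext x
  constructor
  · rintro hx
    obtain ⟨S, -, rfl⟩ := hx.1
    exact mem_image_of_mem ind (mem_derivedFam_of_ind_mem_oscStep (hA.derIter c) hε hx)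
  · rintro ⟨S, hS, rfl⟩
    exact ind_mem_oscStep (hs.derIter c) hε1 hS

end Oscillation

/-- for the generalized Schreier sequence
`x^α_n(F) = 1_F(n)` on `𝓕_α`, the oscillation sets coincide with the
Cantor–Bendixson derived sets for every `0 < ε < 1`; in particular
`𝓞^{ω^α}(ε) = {∅} ≠ ∅`, so the oscillation index is `ω^α`.  The key step:
if `F ∈ 𝓕_α^{(λ+1)}` then `F ∪ {n} ∈ 𝓕_α^{(λ)}` for all large `n`. -/
theorem stmt_18 (F : Ordinal → Set (Finset ℕ)) (hF : SchreierSystem F)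
    (α : Ordinal.{0}) (hα : α.card ≤ Cardinal.aleph0)
    (ε : ℝ) (hε : 0 < ε) (hε1 : ε < 1) :
    (∀ lam : Ordinal.{0},
      oscSet ε (fun n (y : ℕ → Bool) => if y n = true then 1 else 0)
        (indFam (F α)) lam = cbIter (indFam (F α)) lam) ∧
    oscSet ε (fun n (y : ℕ → Bool) => if y n = true then 1 else 0)
      (indFam (F α)) (Ordinal.omega0 ^ α) = {fun _ => false} ∧
    (∀ (lam : Ordinal.{0}) (S : Finset ℕ),
      (fun m => decide (m ∈ S)) ∈ cbIter (indFam (F α)) (lam + 1) →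
      ∃ N : ℕ, ∀ n ≥ N,
        (fun m => decide (m ∈ insert n S)) ∈ cbIter (indFam (F α)) lam) := by
  have hreg := hF.isRegularFamily α hα
  obtain ⟨ν, hν, -⟩ := hreg.exists_rank
  have hcb : ∀ lam, cbIter (indFam (F α)) lam = ind '' transIter derivedFam (F α) lam := by
    rw [indFam_eq_image]
    exact cbIter_image_ind hreg.isLowerSet hν
  have hosc : ∀ lam, oscSet ε (fun n (y : ℕ → Bool) => if y n = true then 1 else 0)
      (indFam (F α)) lam = ind '' transIter derivedFam (F α) lam := by
    rw [indFam_eq_image]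
    exact oscSet_image_ind hreg.isLowerSet hreg.spreading hε hε1
  refine ⟨fun lam => (hosc lam).trans (hcb lam).symm, ?_, fun lam S hS => ?_⟩
  · rw [hosc, hreg.derIter_opow, image_singleton]
    exact congrArg _ (funext fun m => by simp [ind])
  · rw [hcb, transIter_add_one] at hS
    obtain ⟨T, hT, hTS⟩ := hS
    obtain rfl := ind_injective hTS
    obtain ⟨N, hN⟩ := eventually_atTop.1 ((hreg.spreading.derIter lam).eventually_insert_mem hT.2)
    exact ⟨N, fun n hn => (hcb lam).symm ▸ mem_image_of_mem ind (hN n hn)⟩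
end
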